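/- Let G be a group acting by isometries on a geodesic metric space X, let e ∈ X, g ∈ G, and let N be a Morse gauge. Then there exists a Morse gauge N', depending only on N, g, and d(g·e, e), such that every point of X connected to g·e by an N-Morse geodesic is connected to e by an N'-Morse geodesic; i.e., X_{g·e}^{(N)} ⊆ X_e^{(N')}. -/

import Mathlib

open Set Metric Filter

/-- A map is a geodesic on the interval `I`: distances equal parameter differences. -/
def IsGeodesicOn {X : Type*} [MetricSpace X] (γ : ℝ → X) (I : Set ℝ) : Prop :=
  ∀ s ∈ I, ∀ t ∈ I, dist (γ s) (γ t) = |s - t|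

/-- A `(K,C)`-quasigeodesic on the interval `I`. -/
def IsQuasigeodesicOn {X : Type*} [MetricSpace X] (K C : ℝ) (q : ℝ → X) (I : Set ℝ) : Prop :=
  ∀ s ∈ I, ∀ t ∈ I,
    (1 / K) * |s - t| - C ≤ dist (q s) (q t) ∧ dist (q s) (q t) ≤ K * |s - t| + C

/-- The closed `r`-neighborhood of a subset. -/
def nbhd {X : Type*} [MetricSpace X] (A : Set X) (r : ℝ) : Set X :=
  {x | ∃ y ∈ A, dist x y ≤ r}

/-- A path `γ` (on domain `I`) is `N`-Morse: every `(K,C)`-quasigeodesic with endpoints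
on `γ` lies in the `N K C`-neighborhood of `γ`. -/
def IsMorseOn {X : Type*} [MetricSpace X] (N : ℝ → ℝ → ℝ) (γ : ℝ → X) (I : Set ℝ) : Prop :=
  ∀ K C : ℝ, 1 ≤ K → 0 ≤ C → ∀ (q : ℝ → X) (a b : ℝ), a ≤ b →
    IsQuasigeodesicOn K C q (Icc a b) → q a ∈ γ '' I → q b ∈ γ '' I →
    q '' Icc a b ⊆ nbhd (γ '' I) (N K C)

/-- A Morse gauge takes nonnegative values. -/
def MorseGauge (N : ℝ → ℝ → ℝ) : Prop := ∀ K C : ℝ, 1 ≤ K → 0 ≤ C → 0 ≤ N K C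

/-- A geodesic metric space: any two points are joined by a geodesic. -/
def GeodesicSpace (X : Type*) [MetricSpace X] : Prop :=
  ∀ x y : X, ∃ γ : ℝ → X, IsGeodesicOn γ (Icc 0 (dist x y)) ∧ γ 0 = x ∧ γ (dist x y) = y

/-- The set of points joined to `p` by an N-Morse geodesic. -/
def stratum {X : Type*} [MetricSpace X] (N : ℝ → ℝ → ℝ) (p : X) : Set X :=
  {y | ∃ (γ : ℝ → X) (L : ℝ), 0 ≤ L ∧ IsGeodesicOn γ (Icc 0 L) ∧
    γ 0 = p ∧ γ L = y ∧ IsMorseOn N γ (Icc 0 L)}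

/-!
Let `α` be an `N`-Morse geodesic from `p = g • e` to `y`, and let `q` be a geodesic from `p`
to `e` followed by a geodesic `β` from `e` to `y`. With `D = d(p, e)`, the path `q` is a
`(1, 2D)`-quasigeodesic with the endpoints of `α`, so it stays `M = N 1 (2D)`-close to `α`.
The intermediate value theorem, applied to the distances from `q` to the two halves of `α` cut
at any of its points, shows that `α` stays `2M`-close to `q`, hence `(2M + D)`-close to `β`.
Finally, a path that is Hausdorff-close to a Morse geodesic is Morse: a quasigeodesic with
endpoints on `β`, extended by two constant pieces to the nearby points of `α`, is a
quasigeodesic with endpoints on `α`.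
-/

section

variable {X : Type*} [MetricSpace X]

theorem nbhd_mono {A B : Set X} {r : ℝ} (h : A ⊆ B) : nbhd A r ⊆ nbhd B r :=
  fun _ ⟨y, hy, hxy⟩ => ⟨y, h hy, hxy⟩

theorem nbhd_nbhd_subset (A : Set X) (r s : ℝ) : nbhd (nbhd A r) s ⊆ nbhd A (s + r) :=
  fun _ ⟨_, ⟨z, hz, hyz⟩, hxy⟩ => ⟨z, hz, (dist_triangle _ _ _).trans (add_le_add hxy hyz)⟩

theorem IsQuasigeodesicOn.of_le {K C : ℝ} {q : ℝ → X} {I : Set ℝ}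
    (h : ∀ s ∈ I, ∀ t ∈ I, s ≤ t →
      (1 / K) * (t - s) - C ≤ dist (q s) (q t) ∧ dist (q s) (q t) ≤ K * (t - s) + C) :
    IsQuasigeodesicOn K C q I := by
  intro s hs t ht
  rcases le_total s t with hst | hst
  · rw [abs_of_nonpos (sub_nonpos.2 hst), neg_sub]
    exact h s hs t ht hst
  · rw [abs_of_nonneg (sub_nonneg.2 hst), dist_comm]
    exact h t ht s hs hst

theorem IsQuasigeodesicOn.of_dist_le {K C M : ℝ} {q p : ℝ → X} {I : Set ℝ}
    (hq : IsQuasigeodesicOn K C q I) (hpq : ∀ t ∈ I, dist (p t) (q t) ≤ M) :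
    IsQuasigeodesicOn K (C + 2 * M) p I := by
  intro s hs t ht
  have h₁ := dist_triangle4 (p s) (q s) (q t) (p t)
  have h₂ := dist_triangle4 (q s) (p s) (p t) (q t)
  rw [dist_comm (q t) (p t)] at h₁
  rw [dist_comm (q s) (p s)] at h₂
  have := hq s hs t ht
  have := hpq s hs
  have := hpq t ht
  constructor <;> linarith

theorem IsQuasigeodesicOn.comp_projIcc {K C a b r : ℝ} {σ : ℝ → X}
    (hσ : IsQuasigeodesicOn K C σ (Icc a b)) (hK : 1 ≤ K) (hab : a ≤ b) (hr : 0 ≤ r) :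
    IsQuasigeodesicOn K (C + 2 * r) (fun t => σ (projIcc a b hab t)) (Icc (a - r) (b + r)) := by
  have hnear : ∀ t ∈ Icc (a - r) (b + r), |t - projIcc a b hab t| ≤ r := by
    intro t ht
    rw [coe_projIcc, abs_le]
    constructor
    · linarith [max_le (by linarith [ht.1] : a ≤ t + r) (min_le_right b t |>.trans (by linarith))]
    · linarith [le_max_right a (min b t),
        le_min (by linarith [ht.2] : t - r ≤ b) (by linarith : t - r ≤ t)]
  intro s hs t ht
  have hlip := abs_projIcc_sub_projIcc hab (c := s) (d := t)
  have hstretch : |s - t| ≤ |(projIcc a b hab s : ℝ) - projIcc a b hab t| + 2 * r := by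
    have := abs_sub_le s (projIcc a b hab s) t
    have := abs_sub_le (projIcc a b hab s : ℝ) (projIcc a b hab t) t
    rw [abs_sub_comm (projIcc a b hab t : ℝ)] at this
    linarith [hnear s hs, hnear t ht]
  obtain ⟨hlo, hhi⟩ := hσ _ (projIcc a b hab s).2 _ (projIcc a b hab t).2
  have hK₀ : 0 < K := zero_lt_one.trans_le hK
  have hKinv : 1 / K ≤ 1 := (div_le_one hK₀).2 hK
  constructor
  · have := mul_le_mul_of_nonneg_left hstretch (one_div_pos.2 hK₀).le
    nlinarith
  · nlinarith

theorem IsGeodesicOn.lipschitzOnWith {γ : ℝ → X} {I : Set ℝ} (hγ : IsGeodesicOn γ I) :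
    LipschitzOnWith 1 γ I :=
  LipschitzOnWith.mk_one fun s hs t ht => by rw [hγ s hs t ht, Real.dist_eq]

theorem IsGeodesicOn.continuousOn {γ : ℝ → X} {I : Set ℝ} (hγ : IsGeodesicOn γ I) :
    ContinuousOn γ I :=
  hγ.lipschitzOnWith.continuousOn

theorem IsMorseOn.of_subset_nbhd {N : ℝ → ℝ → ℝ} {α β : ℝ → X} {I J : Set ℝ} {M R : ℝ}
    (hα : IsMorseOn N α I) (hβα : β '' J ⊆ nbhd (α '' I) M) (hαβ : α '' I ⊆ nbhd (β '' J) R) :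
    IsMorseOn (fun K C => N K (C + 2 * M + 2) + R) β J := by
  intro K C hK hC σ a b hab hσ hσa hσb
  obtain ⟨x, hx, hxa⟩ := hβα hσa
  obtain ⟨y, hy, hyb⟩ := hβα hσb
  have hM : 0 ≤ M := dist_nonneg.trans hxa
  set σ' : ℝ → X := fun t => if t < a then x else if b < t then y else σ t with hσ'
  have hσσ' : ∀ t ∈ Icc a b, σ' t = σ t := fun t ht => by
    simp only [hσ', if_neg (not_lt.2 ht.1), if_neg (not_lt.2 ht.2)]
  have hclose : ∀ t, dist (σ' t) (σ (projIcc a b hab t)) ≤ M := by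
    intro t
    rcases lt_or_ge t a with hta | hta
    · rw [projIcc_of_le_left hab hta.le, dist_comm]
      simpa only [hσ', if_pos hta] using hxa
    rcases lt_or_ge b t with htb | htb
    · rw [projIcc_of_right_le hab htb.le, dist_comm]
      simpa only [hσ', if_neg (not_lt.2 hta), if_pos htb] using hyb
    · rw [projIcc_of_mem hab ⟨hta, htb⟩, hσσ' t ⟨hta, htb⟩, dist_self]
      exact hM
  have hσ'qg : IsQuasigeodesicOn K (C + 2 * M + 2) σ' (Icc (a - 1) (b + 1)) := by
    convert (hσ.comp_projIcc hK hab zero_le_one).of_dist_le fun t _ => hclose t using 1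
    ring
  have hends : σ' (a - 1) ∈ α '' I ∧ σ' (b + 1) ∈ α '' I := by
    simp only [hσ', if_pos (by linarith : a - 1 < a), if_neg (by linarith : ¬b + 1 < a),
      if_pos (by linarith : b < b + 1)]
    exact ⟨hx, hy⟩
  calc σ '' Icc a b = σ' '' Icc a b := (image_congr hσσ').symm
    _ ⊆ σ' '' Icc (a - 1) (b + 1) := image_mono (Icc_subset_Icc (by linarith) (by linarith))
    _ ⊆ nbhd (α '' I) (N K (C + 2 * M + 2)) :=
      hα K _ hK (by linarith) σ' _ _ (by linarith) hσ'qg hends.1 hends.2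
    _ ⊆ nbhd (nbhd (β '' J) R) (N K (C + 2 * M + 2)) := nbhd_mono hαβ
    _ ⊆ nbhd (β '' J) (N K (C + 2 * M + 2) + R) := nbhd_nbhd_subset _ _ _

theorem exists_infDist_eq_infDist {q : ℝ → X} {a b : ℝ} {A B : Set X}
    (hq : ContinuousOn q (Icc a b)) (hab : a ≤ b) (ha : q a ∈ A) (hb : q b ∈ B) :
    ∃ t ∈ Icc a b, infDist (q t) A = infDist (q t) B := by
  have hf : ContinuousOn (fun t => infDist (q t) A - infDist (q t) B) (Icc a b) :=
    ((continuous_infDist_pt A).comp_continuousOn hq).sub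
      ((continuous_infDist_pt B).comp_continuousOn hq)
  have h₀ : (0 : ℝ) ∈
      Icc (infDist (q a) A - infDist (q a) B) (infDist (q b) A - infDist (q b) B) := by
    rw [infDist_zero_of_mem ha, infDist_zero_of_mem hb]
    exact ⟨by linarith [infDist_nonneg (x := q a) (s := B)],
      by linarith [infDist_nonneg (x := q b) (s := A)]⟩
  obtain ⟨t, ht, h⟩ := intermediate_value_Icc hab hf h₀
  exact ⟨t, ht, sub_eq_zero.1 h⟩

theorem IsGeodesicOn.dist_le_two_mul_of_dist_le {γ : ℝ → X} {I : Set ℝ} {v₁ u v₂ M : ℝ}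
    {x : X} (hγ : IsGeodesicOn γ I) (hv₁ : v₁ ∈ I) (hu : u ∈ I) (hv₂ : v₂ ∈ I)
    (h₁ : v₁ ≤ u) (h₂ : u ≤ v₂) (hx₁ : dist x (γ v₁) ≤ M) (hx₂ : dist x (γ v₂) ≤ M) :
    dist (γ u) x ≤ 2 * M := by
  have hv : dist (γ v₁) (γ v₂) ≤ 2 * M := by
    linarith [dist_triangle_left (γ v₁) (γ v₂) x]
  have hu₁ := dist_triangle (γ u) (γ v₁) x
  have hu₂ := dist_triangle (γ u) (γ v₂) x
  rw [dist_comm (γ v₁) x] at hu₁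
  rw [dist_comm (γ v₂) x] at hu₂
  rw [hγ _ hv₁ _ hv₂, abs_of_nonpos (by linarith)] at hv
  rw [hγ _ hu _ hv₁, abs_of_nonneg (by linarith)] at hu₁
  rw [hγ _ hu _ hv₂, abs_of_nonpos (by linarith)] at hu₂
  linarith

theorem IsGeodesicOn.image_subset_nbhd_of_path {α q : ℝ → X} {ℓ a b M : ℝ}
    (hα : IsGeodesicOn α (Icc 0 ℓ)) (hq : ContinuousOn q (Icc a b)) (hab : a ≤ b)
    (hqa : q a = α 0) (hqb : q b = α ℓ) (hqα : q '' Icc a b ⊆ nbhd (α '' Icc 0 ℓ) M) :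
    α '' Icc 0 ℓ ⊆ nbhd (q '' Icc a b) (2 * M) := by
  rintro _ ⟨u, hu, rfl⟩
  have hcompact : ∀ {s t : ℝ}, Icc s t ⊆ Icc 0 ℓ → IsCompact (α '' Icc s t) := fun h =>
    isCompact_Icc.image_of_continuousOn (hα.continuousOn.mono h)
  obtain ⟨t, ht, heq⟩ := exists_infDist_eq_infDist hq hab (A := α '' Icc 0 u)
    (B := α '' Icc u ℓ) ⟨0, ⟨le_rfl, hu.1⟩, hqa.symm⟩ ⟨ℓ, ⟨hu.2, le_rfl⟩, hqb.symm⟩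
  obtain ⟨_, ⟨v, hv, rfl⟩, hvt⟩ := hqα (mem_image_of_mem q ht)
  have hle : infDist (q t) (α '' Icc 0 u) ≤ M ∧ infDist (q t) (α '' Icc u ℓ) ≤ M := by
    rcases le_total v u with hvu | huv
    · have hmem : α v ∈ α '' Icc 0 u := mem_image_of_mem α ⟨hv.1, hvu⟩
      have := (infDist_le_dist_of_mem hmem).trans hvt
      exact ⟨this, heq ▸ this⟩
    · have hmem : α v ∈ α '' Icc u ℓ := mem_image_of_mem α ⟨huv, hv.2⟩
      have := (infDist_le_dist_of_mem hmem).trans hvt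
      exact ⟨heq ▸ this, this⟩
  obtain ⟨_, ⟨v₁, hv₁, rfl⟩, h₁⟩ := (hcompact (Icc_subset_Icc le_rfl hu.2)).exists_infDist_eq_dist
    ⟨α u, u, ⟨hu.1, le_rfl⟩, rfl⟩ (q t)
  obtain ⟨_, ⟨v₂, hv₂, rfl⟩, h₂⟩ := (hcompact (Icc_subset_Icc hu.1 le_rfl)).exists_infDist_eq_dist
    ⟨α u, u, ⟨le_rfl, hu.2⟩, rfl⟩ (q t)
  exact ⟨q t, mem_image_of_mem q ht, hα.dist_le_two_mul_of_dist_le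
    ⟨hv₁.1, hv₁.2.trans hu.2⟩ hu ⟨hu.1.trans hv₂.1, hv₂.2⟩ hv₁.2 hv₂.1 (h₁ ▸ hle.1) (h₂ ▸ hle.2)⟩

theorem IsGeodesicOn.dist_bounds_of_union {q : ℝ → X} {a c b s t : ℝ} (hac : a ≤ c)
    (h₁ : IsGeodesicOn q (Icc a c)) (h₂ : IsGeodesicOn q (Icc c b)) (hs : s ∈ Icc a b)
    (ht : t ∈ Icc a b) (hst : s ≤ t) :
    t - s - 2 * (c - a) ≤ dist (q s) (q t) ∧ dist (q s) (q t) ≤ t - s := by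
  rcases le_total t c with htc | hct
  · rw [h₁ s ⟨hs.1, hst.trans htc⟩ t ⟨ht.1, htc⟩, abs_of_nonpos (by linarith)]
    constructor <;> linarith
  rcases le_total c s with hcs | hsc
  · rw [h₂ s ⟨hcs, hs.2⟩ t ⟨hct, ht.2⟩, abs_of_nonpos (by linarith)]
    constructor <;> linarith
  have hsc' := h₁ s ⟨hs.1, hsc⟩ c ⟨hac, le_rfl⟩
  have hct' := h₂ c ⟨le_rfl, hct.trans ht.2⟩ t ⟨hct, ht.2⟩
  rw [abs_of_nonpos (by linarith)] at hsc' hct'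
  have := dist_triangle (q s) (q c) (q t)
  have := dist_triangle_left (q c) (q t) (q s)
  constructor <;> linarith [hs.1]

theorem IsGeodesicOn.continuousOn_union {q : ℝ → X} {a c b : ℝ} (hac : a ≤ c) (hcb : c ≤ b)
    (h₁ : IsGeodesicOn q (Icc a c)) (h₂ : IsGeodesicOn q (Icc c b)) :
    ContinuousOn q (Icc a b) := by
  rw [← Icc_union_Icc_eq_Icc hac hcb]
  exact h₁.continuousOn.union_of_isClosed h₂.continuousOn isClosed_Icc isClosed_Icc

theorem IsQuasigeodesicOn.of_isGeodesicOn_union {q : ℝ → X} {a c b : ℝ} (hac : a ≤ c)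
    (h₁ : IsGeodesicOn q (Icc a c)) (h₂ : IsGeodesicOn q (Icc c b)) :
    IsQuasigeodesicOn 1 (2 * (c - a)) q (Icc a b) :=
  .of_le fun s hs t ht hst => by
    have := IsGeodesicOn.dist_bounds_of_union hac h₁ h₂ hs ht hst
    constructor <;> linarith

theorem image_Icc_subset_nbhd_of_isGeodesicOn {q : ℝ → X} {a c b : ℝ} (hac : a ≤ c)
    (hcb : c ≤ b) (hq : IsGeodesicOn q (Icc a c)) : q '' Icc a b ⊆ nbhd (q '' Icc c b) (c - a) := by
  rintro _ ⟨t, ht, rfl⟩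
  rcases le_total t c with htc | hct
  · refine ⟨q c, mem_image_of_mem q ⟨le_rfl, hcb⟩, ?_⟩
    rw [hq t ⟨ht.1, htc⟩ c ⟨ht.1.trans htc, le_rfl⟩, abs_of_nonpos (by linarith)]
    linarith [ht.1]
  · exact ⟨q t, mem_image_of_mem q ⟨hct, ht.2⟩, by simpa using hac⟩

theorem GeodesicSpace.exists_broken_geodesic (hX : GeodesicSpace X) (p e y : X) :
    ∃ q : ℝ → X, IsGeodesicOn q (Icc (-dist p e) 0) ∧ IsGeodesicOn q (Icc 0 (dist e y)) ∧
      q (-dist p e) = p ∧ q 0 = e ∧ q (dist e y) = y := by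
  obtain ⟨η, hη, hη₀, hηD⟩ := hX p e
  obtain ⟨β, hβ, hβ₀, hβL⟩ := hX e y
  set D := dist p e
  set q : ℝ → X := fun t => if t < 0 then η (t + D) else β t with hq
  have hqη : ∀ t ∈ Icc (-D) 0, q t = η (t + D) := by
    intro t ht
    rcases ht.2.lt_or_eq with h | rfl
    · simp only [hq, if_pos h]
    · simp only [hq, lt_irrefl, if_false, zero_add, hηD, hβ₀]
  have hqβ : ∀ t ∈ Icc 0 (dist e y), q t = β t := fun t ht => by
    simp only [hq, if_neg (not_lt.2 ht.1)]
  refine ⟨q, fun s hs t ht => ?_, fun s hs t ht => ?_, ?_, ?_, ?_⟩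
  · rw [hqη s hs, hqη t ht, hη _ ⟨by linarith [hs.1], by linarith [hs.2]⟩ _
      ⟨by linarith [ht.1], by linarith [ht.2]⟩, add_sub_add_right_eq_sub]
  · rw [hqβ s hs, hqβ t ht, hβ s hs t ht]
  · rw [hqη _ ⟨le_rfl, neg_nonpos.2 dist_nonneg⟩, neg_add_cancel, hη₀]
  · rw [hqβ 0 ⟨le_rfl, dist_nonneg⟩, hβ₀]
  · rw [hqβ _ ⟨dist_nonneg, le_rfl⟩, hβL]

end

theorem stmt14_general {X : Type*} [MetricSpace X] (hX : GeodesicSpace X)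
    {G : Type*} [Group G] [MulAction G X]
    (e : X) (g : G) (N : ℝ → ℝ → ℝ) (hN : MorseGauge N) :
    ∃ N' : ℝ → ℝ → ℝ, MorseGauge N' ∧ stratum N (g • e) ⊆ stratum N' e := by
  set D := dist (g • e) e
  set M := N 1 (2 * D)
  have hD : 0 ≤ D := dist_nonneg
  have hM : 0 ≤ M := hN 1 _ le_rfl (by positivity)
  refine ⟨fun K C => N K (C + 2 * M + 2) + (2 * M + D),
    fun K C hK hC => add_nonneg (hN K _ hK (by positivity)) (by positivity), ?_⟩
  rintro y ⟨α, ℓ, hℓ, hα, hα₀, hαℓ, hαN⟩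
  obtain ⟨q, hq₁, hq₂, hqp, hqe, hqy⟩ := hX.exists_broken_geodesic (g • e) e y
  set L := dist e y
  have hL : 0 ≤ L := dist_nonneg
  have hqg : IsQuasigeodesicOn 1 (2 * D) q (Icc (-D) L) := by
    simpa using IsQuasigeodesicOn.of_isGeodesicOn_union (neg_nonpos.2 hD) hq₁ hq₂
  have hqα : q '' Icc (-D) L ⊆ nbhd (α '' Icc 0 ℓ) M :=
    hαN 1 _ le_rfl (by positivity) q _ _ (by linarith) hqg ⟨0, ⟨le_rfl, hℓ⟩, hα₀.trans hqp.symm⟩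
      ⟨ℓ, ⟨hℓ, le_rfl⟩, hαℓ.trans hqy.symm⟩
  have hαq : α '' Icc 0 ℓ ⊆ nbhd (q '' Icc 0 L) (2 * M + D) :=
    calc α '' Icc 0 ℓ ⊆ nbhd (q '' Icc (-D) L) (2 * M) :=
          hα.image_subset_nbhd_of_path (hq₁.continuousOn_union (neg_nonpos.2 hD) hL hq₂)
            (by linarith) (hqp.trans hα₀.symm) (hqy.trans hαℓ.symm) hqα
      _ ⊆ nbhd (nbhd (q '' Icc 0 L) D) (2 * M) := by
          simpa using nbhd_mono (r := 2 * M)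
            (image_Icc_subset_nbhd_of_isGeodesicOn (neg_nonpos.2 hD) hL hq₁)
      _ ⊆ nbhd (q '' Icc 0 L) (2 * M + D) := nbhd_nbhd_subset _ _ _
  exact ⟨q, L, hL, hq₂, hqe, hqy, hαN.of_subset_nbhd
    ((image_mono (Icc_subset_Icc (by linarith) le_rfl)).trans hqα) hαq⟩

/-- change of basepoint for Morse strata: if G acts by isometries, then for
every gauge N and g ∈ G there is a gauge N' (depending only on N, g and d(g·e,e)) with
X_{g·e}^{(N)} ⊆ X_e^{(N')}. -/
theorem stmt14 {X : Type*} [MetricSpace X] (hX : GeodesicSpace X)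
    {G : Type*} [Group G] [MulAction G X]
    (hiso : ∀ (g : G) (x y : X), dist (g • x) (g • y) = dist x y)
    (e : X) (g : G) (N : ℝ → ℝ → ℝ) (hN : MorseGauge N) :
    ∃ N' : ℝ → ℝ → ℝ, MorseGauge N' ∧ stratum N (g • e) ⊆ stratum N' e :=
  stmt14_general hX e g N hN
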